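/- The logic Box = wPL ⊕ bw_2 ⊕ (¬p ∨ ¬¬p) equals Log({S_n : n ∈ ω}), the logic of the class of posets S_n. -/

import Mathlib

/-! # Common framework: superintuitionistic logics, Kripke frames and models -/

/-! ## Intuitionistic propositional formulas -/

inductive Form : Type
  | var : ℕ → Form
  | bot : Form
  | top : Form
  | and : Form → Form → Form
  | or  : Form → Form → Form
  | imp : Form → Form → Form
deriving DecidableEq

namespace Form

/-- Implication depth of a formula. -/
def depth : Form → ℕ
  | var _ => 0
  | bot => 0
  | top => 0
  | and φ ψ => max φ.depth ψ.depth
  | or φ ψ => max φ.depth ψ.depth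
  | imp φ ψ => max φ.depth ψ.depth + 1

/-- All propositional variables of the formula are among `p_0, …, p_{m-1}`. -/
def varsLt (m : ℕ) : Form → Prop
  | var p => p < m
  | bot => True
  | top => True
  | and φ ψ => φ.varsLt m ∧ ψ.varsLt m
  | or φ ψ => φ.varsLt m ∧ ψ.varsLt m
  | imp φ ψ => φ.varsLt m ∧ ψ.varsLt m

/-- Uniform substitution. -/
def subst (σ : ℕ → Form) : Form → Form
  | var p => σ p
  | bot => bot
  | top => top
  | and φ ψ => and (φ.subst σ) (ψ.subst σ)
  | or φ ψ => or (φ.subst σ) (ψ.subst σ)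
  | imp φ ψ => imp (φ.subst σ) (ψ.subst σ)

/-- Biconditional. -/
def iff (φ ψ : Form) : Form := and (imp φ ψ) (imp ψ φ)

/-- Negation. -/
def neg (φ : Form) : Form := imp φ bot

end Form

/-! ## IPC and superintuitionistic logics -/

/-- A Hilbert-style axiomatization of intuitionistic propositional logic. -/
inductive IPC : Form → Prop
  | ax1 (φ ψ : Form) : IPC (.imp φ (.imp ψ φ))
  | ax2 (φ ψ χ : Form) :
      IPC (.imp (.imp φ (.imp ψ χ)) (.imp (.imp φ ψ) (.imp φ χ)))
  | andE1 (φ ψ : Form) : IPC (.imp (.and φ ψ) φ)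
  | andE2 (φ ψ : Form) : IPC (.imp (.and φ ψ) ψ)
  | andI (φ ψ : Form) : IPC (.imp φ (.imp ψ (.and φ ψ)))
  | orI1 (φ ψ : Form) : IPC (.imp φ (.or φ ψ))
  | orI2 (φ ψ : Form) : IPC (.imp ψ (.or φ ψ))
  | orE (φ ψ χ : Form) :
      IPC (.imp (.imp φ χ) (.imp (.imp ψ χ) (.imp (.or φ ψ) χ)))
  | botE (φ : Form) : IPC (.imp .bot φ)
  | topI : IPC .top
  | mp (φ ψ : Form) : IPC (.imp φ ψ) → IPC φ → IPC ψ

/-- The set of theorems of IPC. -/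
def IPCSet : Set Form := {φ | IPC φ}

/-- A superintuitionistic logic: a set of formulas containing all theorems of
IPC, closed under modus ponens and uniform substitution. -/
def IsSILogic (L : Set Form) : Prop :=
  IPCSet ⊆ L ∧
  (∀ φ ψ : Form, Form.imp φ ψ ∈ L → φ ∈ L → ψ ∈ L) ∧
  (∀ (φ : Form) (σ : ℕ → Form), φ ∈ L → φ.subst σ ∈ L)

/-- `oplus L Γ` is the least superintuitionistic logic containing `L` and `Γ`
(written `L ⊕ Γ`). -/
def oplus (L Γ : Set Form) : Set Form :=
  ⋂₀ {M : Set Form | IsSILogic M ∧ L ⊆ M ∧ Γ ⊆ M}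

/-- A logic is `n`-uniform if every formula is provably equivalent in it to a
formula of implication depth at most `n`. -/
def Uniform (L : Set Form) (n : ℕ) : Prop :=
  ∀ φ : Form, ∃ ψ : Form, ψ.depth ≤ n ∧ Form.iff φ ψ ∈ L

/-- A logic is locally tabular if over each finite tuple of variables there are
only finitely many formulas up to provable equivalence. -/
def LocallyTabular (L : Set Form) : Prop :=
  ∀ m : ℕ, ∃ Φ : Finset Form, ∀ φ : Form, φ.varsLt m → ∃ ψ ∈ Φ, Form.iff φ ψ ∈ L

/-! ## Kripke frames (posets) -/

structure Frame : Type 1 where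
  W : Type
  le : W → W → Prop
  refl : ∀ x, le x x
  trans : ∀ x y z, le x y → le y z → le x z
  antisymm : ∀ x y, le x y → le y x → x = y

namespace Frame

def lt (F : Frame) (a b : F.W) : Prop := F.le a b ∧ a ≠ b

/-- A valuation is persistent if it is preserved upwards. -/
def Persistent (F : Frame) (V : ℕ → F.W → Prop) : Prop :=
  ∀ p a b, F.le a b → V p a → V p b

/-- Kripke forcing. -/
def force (F : Frame) (V : ℕ → F.W → Prop) : Form → F.W → Prop
  | .var p, w => V p w
  | .bot, _ => False
  | .top, _ => True
  | .and φ ψ, w => F.force V φ w ∧ F.force V ψ w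
  | .or φ ψ, w => F.force V φ w ∨ F.force V ψ w
  | .imp φ ψ, w => ∀ v, F.le w v → F.force V φ v → F.force V ψ v

/-- `F ⊩ φ`. -/
def Valid (F : Frame) (φ : Form) : Prop :=
  ∀ V : ℕ → F.W → Prop, F.Persistent V → ∀ w : F.W, F.force V φ w

def Rooted (F : Frame) : Prop := ∃ r, ∀ w, F.le r w

/-- The subposet on a subset of the carrier. -/
def restrict (F : Frame) (s : Set F.W) : Frame where
  W := s
  le a b := F.le a.1 b.1
  refl a := F.refl a.1
  trans a b c h1 h2 := F.trans a.1 b.1 c.1 h1 h2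
  antisymm a b h1 h2 := Subtype.ext (F.antisymm a.1 b.1 h1 h2)

/-- The rooted upset `↑z`. -/
def up (F : Frame) (z : F.W) : Frame := F.restrict {w | F.le z w}

/-- There is a chain of `d` elements in `↑w` starting at `w`. -/
def hasChainUp (F : Frame) (w : F.W) (d : ℕ) : Prop :=
  ∃ f : Fin d → F.W, (∀ i : Fin d, (i : ℕ) = 0 → f i = w) ∧
    (∀ i j : Fin d, (i : ℕ) < (j : ℕ) → F.lt (f i) (f j))

/-- The depth of `w` is `d`: the longest chain in `↑w` has exactly `d` elements. -/
def depthEq (F : Frame) (w : F.W) (d : ℕ) : Prop :=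
  F.hasChainUp w d ∧ ¬ F.hasChainUp w (d + 1)

/-- The covering relation of the poset. -/
def covBy (F : Frame) (a b : F.W) : Prop :=
  F.lt a b ∧ ∀ c, F.lt a c → F.lt c b → False

end Frame

/-- A p-morphism of posets. -/
def IsPMorphism (P Q : Frame) (f : P.W → Q.W) : Prop :=
  (∀ a b, P.le a b → Q.le (f a) (f b)) ∧
  (∀ a b, Q.le (f a) b → ∃ a', P.le a a' ∧ f a' = b)

/-- `Q` is a p-morphic image of `P`. -/
def PMorphicImage (P Q : Frame) : Prop :=
  ∃ f : P.W → Q.W, IsPMorphism P Q f ∧ Function.Surjective f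

/-- Order isomorphism of posets. -/
def FrameIso (P Q : Frame) : Prop :=
  ∃ f : P.W → Q.W, Function.Bijective f ∧ ∀ a b, P.le a b ↔ Q.le (f a) (f b)

/-- The logic of a class of posets. -/
def LogK (K : Set Frame) : Set Form := {φ | ∀ F ∈ K, F.Valid φ}

/-- The logic of a single poset. -/
def FrameLog (F : Frame) : Set Form := {φ | F.Valid φ}

/-- `J` is a Yankov formula for the finite rooted poset `Q`: a finite poset
refutes `J` exactly when `Q` is isomorphic to a rooted upset of one of its
p-morphic images. -/
def IsYankov (J : Form) (Q : Frame) : Prop :=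
  ∀ P : Frame, Finite P.W →
    (¬ P.Valid J ↔ ∃ G : Frame, PMorphicImage P G ∧ ∃ z : G.W, FrameIso (G.up z) Q)

/-! ## Rooted Kripke models over `n` propositional variables -/

structure Model (n : ℕ) : Type 1 where
  W : Type
  le : W → W → Prop
  refl : ∀ x, le x x
  trans : ∀ x y z, le x y → le y z → le x z
  antisymm : ∀ x y, le x y → le y x → x = y
  root : W
  rooted : ∀ w, le root w
  col : W → Set (Fin n)
  mono : ∀ a b, le a b → col a ⊆ col b

namespace Model

/-- The underlying poset of a model. -/
def frame {n : ℕ} (M : Model n) : Frame :=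
  ⟨M.W, M.le, M.refl, M.trans, M.antisymm⟩

def force {n : ℕ} (M : Model n) : Form → M.W → Prop
  | .var p, w => ∃ h : p < n, (⟨p, h⟩ : Fin n) ∈ M.col w
  | .bot, _ => False
  | .top, _ => True
  | .and φ ψ, w => M.force φ w ∧ M.force ψ w
  | .or φ ψ, w => M.force φ w ∨ M.force ψ w
  | .imp φ ψ, w => ∀ v, M.le w v → M.force φ v → M.force ψ v

/-- Satisfaction at the root of the model. -/
def Sat {n : ℕ} (M : Model n) (φ : Form) : Prop := M.force φ M.root

/-- (Full) bisimilarity of two rooted models. -/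
def Bisim {n : ℕ} (M N : Model n) : Prop :=
  ∃ S : M.W → N.W → Prop,
    S M.root N.root ∧
    (∀ a b, S a b → M.col a = N.col b) ∧
    (∀ a b a', S a b → M.le a a' → ∃ b', N.le b b' ∧ S a' b') ∧
    (∀ a b b', S a b → N.le b b' → ∃ a', M.le a a' ∧ S a' b')

/-- `k`-bisimilarity of the points `x, y`, via a decreasing chain
`S k ⊆ ⋯ ⊆ S 0` of relations. -/
def NBisimAt {n : ℕ} (M N : Model n) (k : ℕ) (x : M.W) (y : N.W) : Prop :=
  ∃ S : ℕ → M.W → N.W → Prop,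
    (∀ j a b, S (j + 1) a b → S j a b) ∧
    S k x y ∧
    (∀ a b, S 0 a b → M.col a = N.col b) ∧
    (∀ j a b a', j < k → S (j + 1) a b → M.le a a' →
        ∃ b', N.le b b' ∧ S j a' b') ∧
    (∀ j a b b', j < k → S (j + 1) a b → N.le b b' →
        ∃ a', M.le a a' ∧ S j a' b')

/-- `k`-bisimilarity of two rooted models. -/
def NBisim {n : ℕ} (M N : Model n) (k : ℕ) : Prop :=
  NBisimAt M N k M.root N.root

/-- The submodel on the rooted upset `↑z`. -/
def up {n : ℕ} (M : Model n) (z : M.W) : Model n where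
  W := {w : M.W // M.le z w}
  le a b := M.le a.1 b.1
  refl a := M.refl a.1
  trans a b c h1 h2 := M.trans a.1 b.1 c.1 h1 h2
  antisymm a b h1 h2 := Subtype.ext (M.antisymm a.1 b.1 h1 h2)
  root := ⟨z, M.refl z⟩
  rooted w := w.2
  col a := M.col a.1
  mono a b h := M.mono a.1 b.1 h

/-- `(M, x) ≤ₖ (N, y)`: there is `z ≥ x` such that `(↑z, z)` is `k`-bisimilar
with `(N, y)`. -/
def LeBisim {n : ℕ} (M N : Model n) (k : ℕ) : Prop :=
  ∃ z : M.W, M.le M.root z ∧ NBisim (M.up z) N k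

/-- Two points of a model are bisimilar. -/
def PointsBisim {n : ℕ} (M : Model n) (a b : M.W) : Prop :=
  ∃ S : M.W → M.W → Prop,
    S a b ∧
    (∀ x y, S x y → M.col x = M.col y) ∧
    (∀ x y x', S x y → M.le x x' → ∃ y', M.le y y' ∧ S x' y') ∧
    (∀ x y y', S x y → M.le y y' → ∃ x', M.le x x' ∧ S x' y')

/-- A model over `n` variables is (`n`-)generated if it contains no two
distinct bisimilar points. -/
def Generated {n : ℕ} (M : Model n) : Prop :=
  ∀ a b : M.W, M.PointsBisim a b → a = b

/-- Isomorphism of models: a root-preserving, color-preserving order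
isomorphism. -/
def Iso {n : ℕ} (M N : Model n) : Prop :=
  ∃ f : M.W → N.W, Function.Bijective f ∧ f M.root = N.root ∧
    (∀ a b, M.le a b ↔ N.le (f a) (f b)) ∧ (∀ a, N.col (f a) = M.col a)

/-- `M` is a model over the class of posets `K`: its underlying poset is a
p-morphic image of a rooted upset of a member of `K`. -/
def InClass {n : ℕ} (K : Set Frame) (M : Model n) : Prop :=
  ∃ F ∈ K, ∃ z : F.W, PMorphicImage (F.up z) M.frame

/-- The model on the rooted upset `↑z` of a frame `F`, with coloring `c`. -/
def ofFrame (F : Frame) (z : F.W) (n : ℕ) (c : (F.up z).W → Set (Fin n))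
    (hc : ∀ a b : (F.up z).W, (F.up z).le a b → c a ⊆ c b) : Model n where
  W := (F.up z).W
  le := (F.up z).le
  refl := (F.up z).refl
  trans := (F.up z).trans
  antisymm := (F.up z).antisymm
  root := ⟨z, F.refl z⟩
  rooted w := w.2
  col := c
  mono := hc

end Model

/-! ## Boolean sums and stacks -/

/-- A (finite rooted) poset is a Boolean sum: it is rooted, covers decrease the
depth by exactly one, and every point of depth `k+1` lies below every point of
depth `k`. -/
def IsBooleanSum (F : Frame) : Prop :=
  F.Rooted ∧
  (∀ a b da db, F.covBy a b → F.depthEq a da → F.depthEq b db → da = db + 1) ∧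
  (∀ a b k, F.depthEq a (k + 1) → F.depthEq b k → F.le a b)

/-- `F` contains a `k`-stack: `k` consecutive layers (sets of points of equal
depth) each containing at least two points. -/
def HasStack (F : Frame) (k : ℕ) : Prop :=
  ∃ j : ℕ, ∀ i : ℕ, j ≤ i → i < j + k →
    ∃ a b : F.W, a ≠ b ∧ F.depthEq a i ∧ F.depthEq b i

/-! ## The posets Q₁, …, Q₈ -/

def q1le : Fin 4 → Fin 4 → Bool := fun a b =>
  a = b || a = 0 || (a = 1 && b = 3)
def q2le : Fin 5 → Fin 5 → Bool := fun a b =>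
  a = b || a = 0 || (a = 1 && (b = 3 || b = 4)) || (a = 2 && b = 4)
def q3le : Fin 5 → Fin 5 → Bool := fun a b =>
  a = b || a = 0 || (a = 1 && b = 4) || (a = 2 && (b = 3 || b = 4)) ||
    (a = 3 && b = 4)
def q4le : Fin 5 → Fin 5 → Bool := fun a b =>
  a = b || a = 0 || ((a = 1 || a = 2) && (b = 3 || b = 4))
def q5le : Fin 6 → Fin 6 → Bool := fun a b =>
  a = b || a = 0 || b = 5 || ((a = 1 || a = 2) && (b = 3 || b = 4))
def q6le : Fin 4 → Fin 4 → Bool := fun a b =>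
  a = b || a = 0 || b = 3
def q7le : Fin 5 → Fin 5 → Bool := fun a b =>
  a = b || a = 0 || (a = 1 && b = 3) || (a = 2 && b = 4)
def q8le : Fin 4 → Fin 4 → Bool := fun a b =>
  a = b || a = 0

/-- `Q₁`: root `0`; immediate successors `1`, `2`; `2` maximal; `3` the unique
(maximal) immediate successor of `1`. -/
def Q1f : Frame :=
  ⟨Fin 4, fun a b => q1le a b = true, by decide, by decide, by decide⟩
/-- `Q₂`: root `0`; immediate successors `1`, `2`; maximal points `3`, `4`;
`1 < 3`, `1 < 4`, `2 < 4`, `2 ≮ 3`. -/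
def Q2f : Frame :=
  ⟨Fin 5, fun a b => q2le a b = true, by decide, by decide, by decide⟩
/-- `Q₃`: root `0`; immediate successors `1`, `2`; `3` covers `2`; top `4`
with `1 < 4` and `3 < 4`. -/
def Q3f : Frame :=
  ⟨Fin 5, fun a b => q3le a b = true, by decide, by decide, by decide⟩
/-- `Q₄`: root `0`; `1`, `2` cover the root; maximal `3`, `4` above both `1`
and `2`. -/
def Q4f : Frame :=
  ⟨Fin 5, fun a b => q4le a b = true, by decide, by decide, by decide⟩
/-- `Q₅`: `Q₄` with a greatest element `5` added on top. -/
def Q5f : Frame :=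
  ⟨Fin 6, fun a b => q5le a b = true, by decide, by decide, by decide⟩
/-- `Q₆`: the diamond. -/
def Q6f : Frame :=
  ⟨Fin 4, fun a b => q6le a b = true, by decide, by decide, by decide⟩
/-- `Q₇`: root `0`; `1 < 3`, `2 < 4`, and no other strict relations above the
root. -/
def Q7f : Frame :=
  ⟨Fin 5, fun a b => q7le a b = true, by decide, by decide, by decide⟩
/-- `Q₈`: a root with three pairwise incomparable maximal points. -/
def Q8f : Frame :=
  ⟨Fin 4, fun a b => q8le a b = true, by decide, by decide, by decide⟩

/-! ## Particular logics -/

/-- The one-element poset. -/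
def unitFrame : Frame :=
  ⟨PUnit, fun _ _ => True, fun _ => trivial, fun _ _ _ _ _ => trivial,
    fun a b _ _ => Subsingleton.elim a b⟩

/-- The two-element chain. -/
def chain2 : Frame :=
  ⟨Bool, fun a b => a ≤ b, le_refl, fun _ _ _ => le_trans,
    fun _ _ => le_antisymm⟩

/-- Classical propositional logic: the logic of the one-element poset. -/
def CPC : Set Form := FrameLog unitFrame

/-- The logic of the two-element chain. -/
def Sme : Set Form := FrameLog chain2

/-- The weak Peirce law `(q → p) ∨ (((p → q) → p) → p)`. -/
def wPLax : Form :=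
  .or (.imp (.var 1) (.var 0))
    (.imp (.imp (.imp (.var 0) (.var 1)) (.var 0)) (.var 0))

/-- The logic `wPL = IPC ⊕ (q → p) ∨ (((p → q) → p) → p)`. -/
def wPL : Set Form := oplus IPCSet {wPLax}

/-- The bounded-width-2 axiom `⋁_{i≤2} (pᵢ → ⋁_{j≠i} pⱼ)`. -/
def bw2ax : Form :=
  .or (.imp (.var 0) (.or (.var 1) (.var 2)))
    (.or (.imp (.var 1) (.or (.var 0) (.var 2)))
      (.imp (.var 2) (.or (.var 0) (.var 1))))

/-- The axiom `¬p ∨ ¬¬p`. -/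
def kcax : Form := .or (Form.neg (.var 0)) (Form.neg (Form.neg (.var 0)))

/-- The logic `Box = wPL ⊕ bw₂ ⊕ (¬p ∨ ¬¬p)`. -/
def BoxLogic : Set Form := oplus wPL {bw2ax, kcax}

/-- The bounded-depth formulas. -/
def bd : ℕ → Form
  | 0 => .var 0
  | n + 1 => .or (.var (n + 1)) (.imp (.var (n + 1)) (bd n))

/-- The logic `BD_n = IPC ⊕ bd_n`. -/
def BD (n : ℕ) : Set Form := oplus IPCSet {bd n}

/-- A logic is of finite depth if it contains some `BD_n`. -/
def FiniteDepth (L : Set Form) : Prop := ∃ n, BD n ⊆ L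

/-! ## The Rieger–Nishimura ladder -/

/-- Points of the Rieger–Nishimura ladder: `inl k = L_k`, `inr k = R_k`. -/
abbrev RNpt : Type := ℕ ⊕ ℕ

/-- The covering relation of the Rieger–Nishimura ladder (`rnCov a b` means
`a ⋖ b`, i.e. `b` is an immediate successor of `a`). -/
inductive rnCov : RNpt → RNpt → Prop
  | ll (k : ℕ) : rnCov (.inl (k + 1)) (.inl k)
  | rr (k : ℕ) : rnCov (.inr (k + 1)) (.inr k)
  | rl (k : ℕ) : rnCov (.inr (k + 1)) (.inl k)
  | lr (k : ℕ) : rnCov (.inl (k + 2)) (.inr k)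

private def rnIdx : RNpt → ℕ
  | .inl k => 2 * k
  | .inr k => 2 * k + 1

private theorem rnCov_idx {a b : RNpt} (h : rnCov a b) : rnIdx b < rnIdx a := by
  cases h <;> simp [rnIdx] <;> omega

private theorem rnLe_idx {a b : RNpt} (h : Relation.ReflTransGen rnCov a b) :
    rnIdx b ≤ rnIdx a := by
  induction h with
  | refl => exact le_rfl
  | tail _ h₂ ih => exact le_trans (le_of_lt (rnCov_idx h₂)) ih

private theorem rnIdx_inj {a b : RNpt} (h : rnIdx a = rnIdx b) : a = b := by
  rcases a with a | a <;> rcases b with b | b <;> simp [rnIdx] at h ⊢ <;> omega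

/-- The Rieger–Nishimura ladder as a poset: the order is the reflexive
transitive closure of the covering relation. -/
def RN : Frame where
  W := RNpt
  le a b := Relation.ReflTransGen rnCov a b
  refl _ := Relation.ReflTransGen.refl
  trans _ _ _ h1 h2 := h1.trans h2
  antisymm _ _ h1 h2 := rnIdx_inj (le_antisymm (rnLe_idx h2) (rnLe_idx h1))

/-! ## Combs -/

def combLe (n : ℕ) : (Fin n ⊕ Fin n) → (Fin n ⊕ Fin n) → Prop
  | .inl i, .inl j => i ≤ j
  | .inl i, .inr j => i ≤ j
  | .inr i, .inr j => i = j
  | .inr _, .inl _ => False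

/-- The `n`-comb: base points `x_1 ≤ … ≤ x_n` (encoded `inl 0, …, inl (n-1)`)
and maximal teeth `y_1, …, y_n` (encoded `inr 0, …, inr (n-1)`), with
`x_i ≤ y_j ↔ i ≤ j` and the teeth pairwise incomparable. -/
def Comb (n : ℕ) : Frame where
  W := Fin n ⊕ Fin n
  le := combLe n
  refl := by rintro (i | i) <;> simp [combLe]
  trans := by
    rintro (i | i) (j | j) (k | k) h1 h2 <;> simp only [combLe] at * <;>
      first
        | exact le_trans h1 h2
        | exact h2 ▸ h1
  antisymm := by
    rintro (i | i) (j | j) h1 h2 <;> simp only [combLe] at * <;>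
      first
        | exact congrArg Sum.inl (le_antisymm h1 h2)
        | exact congrArg Sum.inr h1

/-- A broken `m`-comb: (isomorphic to) a subposet of the `m`-comb containing
all of the base points `x_1, …, x_m`. -/
def IsBrokenComb (F : Frame) (m : ℕ) : Prop :=
  ∃ s : Set (Comb m).W, (∀ i : Fin m, Sum.inl i ∈ s) ∧
    FrameIso F ((Comb m).restrict s)

/-- The logic of the class of all combs. -/
def LFC : Set Form := LogK {F | ∃ n, F = Comb n}

/-! ## The stacked models `M_n^k` and `N_n^k` -/

/-- Height index of a point: layer `j` (from the top) has index `j`, the root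
(`none`) has index `k+1`. -/
def stackIdx (k : ℕ) : Option (Fin (k + 1) × Bool) → ℕ
  | none => k + 1
  | some (j, _) => j

/-- Size of the color (an initial segment of the variables): the left point
(`false`) of layer `j` gets `1^{n-j}0^j`, the right point (`true`) gets
`1^{n-j-1}0^{j+1}`, and the root gets `1^r0^{n-r}`. -/
def stackColSize (n k r : ℕ) : Option (Fin (k + 1) × Bool) → ℕ
  | none => r
  | some (j, false) => n - j
  | some (j, true) => n - ((j : ℕ) + 1)

private theorem stackColSize_le (n k r : ℕ) (hr : r ≤ n - (k + 1))
    {a b : Option (Fin (k + 1) × Bool)} (h : stackIdx k b < stackIdx k a) :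
    stackColSize n k r a ≤ stackColSize n k r b := by
  rcases a with _ | ⟨j, _ | _⟩ <;> rcases b with _ | ⟨j', _ | _⟩ <;>
    simp only [stackIdx, stackColSize] at * <;> omega

/-- The common shape of `M_n^k` and `N_n^k`, with root color `1^r0^{n-r}`:
`k+1` layers of two points stacked on top of a root. -/
def stackModel (n k r : ℕ) (hr : r ≤ n - (k + 1)) : Model n where
  W := Option (Fin (k + 1) × Bool)
  le a b := a = b ∨ stackIdx k b < stackIdx k a
  refl _ := Or.inl rfl
  trans := by
    rintro a b c (rfl | h1) h2
    · exact h2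
    · rcases h2 with rfl | h2
      · exact Or.inr h1
      · exact Or.inr (h2.trans h1)
  antisymm := by
    rintro a b (rfl | h1) h2
    · rfl
    · rcases h2 with rfl | h2
      · rfl
      · omega
  root := none
  rooted := by
    rintro (_ | ⟨j, s⟩)
    · exact Or.inl rfl
    · exact Or.inr j.isLt
  col a := {i : Fin n | (i : ℕ) < stackColSize n k r a}
  mono := by
    rintro a b (rfl | h) i hi
    · exact hi
    · exact lt_of_lt_of_le hi (stackColSize_le n k r hr h)

/-- The model `M_n^k` (root color `1^{n-k-1}0^{k+1}`). -/
def Mmodel (n k : ℕ) : Model n := stackModel n k (n - (k + 1)) le_rfl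

/-- The model `N_n^k` (root color `1^{n-k-2}0^{k+2}`). -/
def Nmodel (n k : ℕ) : Model n := stackModel n k (n - (k + 2)) (by omega)

/-! ## The frames `S_n` -/

/-- Height index in `S_n`: the top point (`some none`) has index `0`, the two
points of the `j`-th middle layer have index `j+1`, and the root (`none`) has
index `n`. -/
def sIdx (n : ℕ) : Option (Option (Fin (n - 1) × Bool)) → ℕ
  | none => n
  | some none => 0
  | some (some (j, _)) => (j : ℕ) + 1

/-- The frame `S_n` (for `n ≥ 2`): the Boolean sum whose layers from top to
bottom have sizes `1, 2, …, 2, 1` (with `n - 1` layers of size `2`). -/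
def SFrame (n : ℕ) : Frame where
  W := Option (Option (Fin (n - 1) × Bool))
  le a b := a = b ∨ sIdx n b < sIdx n a
  refl _ := Or.inl rfl
  trans := by
    rintro a b c (rfl | h1) h2
    · exact h2
    · rcases h2 with rfl | h2
      · exact Or.inr h1
      · exact Or.inr (h2.trans h1)
  antisymm := by
    rintro a b (rfl | h1) h2
    · rfl
    · rcases h2 with rfl | h2
      · rfl
      · omega

/-! Soundness: `S_n` has a top, has width two, and satisfies the tower property
`u < z ∥ v → u ≤ v`; these frame conditions validate `¬p ∨ ¬¬p`, `bw₂` and the weak Peirce law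
respectively.

Completeness: given a logic `M ⊇ Box` and `φ ∉ M`, extend `M` to a prime theory `x₀` omitting `φ`.
The three axioms, instantiated in `x₀`, force the same three conditions (with directedness in
place of the top) on the primes above `x₀`. Take a finite family of such primes containing
witnesses for all refuted implications among the subformulas of `φ`, and add a top. In this finite
poset the tower property makes incomparable points share their upper sets, so the coheight
layers it into antichains of size at most two, each lying entirely below the next: it is a
p-morphic image of some `S_n`, and the truth lemma refutes `φ` at its root `x₀`. -/

namespace Frame

variable {F : Frame} {V : ℕ → F.W → Prop}

theorem force_mono (hV : F.Persistent V) (φ : Form) {a b : F.W} (h : F.le a b) :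
    F.force V φ a → F.force V φ b := by
  induction φ generalizing a b with
  | var p => exact hV p a b h
  | bot | top => exact id
  | and φ ψ ihφ ihψ => exact fun hf => ⟨ihφ h hf.1, ihψ h hf.2⟩
  | or φ ψ ihφ ihψ => exact Or.imp (ihφ h) (ihψ h)
  | imp φ ψ _ _ => exact fun hf v hv => hf v (F.trans a b v h hv)

theorem valid_of_IPC {φ : Form} (h : IPC φ) : F.Valid φ := by
  induction h with
  | ax1 φ ψ => exact fun V hV w v _ hφ u hu _ => force_mono hV φ hu hφ
  | ax2 φ ψ χ =>
      exact fun V hV w a _ H1 b hb H2 c hc hφ =>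
        H1 c (F.trans a b c hb hc) hφ c (F.refl c) (H2 c hc hφ)
  | andE1 => exact fun V hV w v _ hf => hf.1
  | andE2 => exact fun V hV w v _ hf => hf.2
  | andI φ ψ => exact fun V hV w a _ hφ b hb hψ => ⟨force_mono hV φ hb hφ, hψ⟩
  | orI1 => exact fun V hV w v _ hf => Or.inl hf
  | orI2 => exact fun V hV w v _ hf => Or.inr hf
  | orE =>
      exact fun V hV w a _ H1 b hb H2 c hc hor =>
        hor.elim (H1 c (F.trans a b c hb hc)) (H2 c hc)
  | botE => exact fun V hV w v _ hf => hf.elim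
  | topI => exact fun V hV w => trivial
  | mp φ ψ _ _ ih1 ih2 => exact fun V hV w => ih1 V hV w w (F.refl w) (ih2 V hV w)

theorem force_subst (σ : ℕ → Form) (φ : Form) (w : F.W) :
    F.force V (φ.subst σ) w ↔ F.force (fun p x => F.force V (σ p) x) φ w := by
  induction φ generalizing w with
  | var | bot | top => exact Iff.rfl
  | and φ ψ ihφ ihψ => exact and_congr (ihφ w) (ihψ w)
  | or φ ψ ihφ ihψ => exact or_congr (ihφ w) (ihψ w)
  | imp φ ψ ihφ ihψ =>
      exact forall_congr' fun v => imp_congr_right fun _ => imp_congr (ihφ v) (ihψ v)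

theorem Valid.subst {φ : Form} (h : F.Valid φ) (σ : ℕ → Form) : F.Valid (φ.subst σ) :=
  fun _ hV w => (force_subst σ φ w).2 <|
    h _ (fun p _ _ hab => force_mono hV (σ p) hab) w

theorem valid_kcax_of_le_top {t : F.W} (ht : ∀ w, F.le w t) : F.Valid kcax := by
  intro V hV w
  by_cases h0 : V 0 t
  · exact Or.inr fun v _ hneg => hneg t (ht v) h0
  · exact Or.inl fun v _ h0v => h0 (hV 0 v t (ht v) h0v)

theorem valid_bw2ax_of_no_three_incompRel
    (hwidth : ∀ a b c : F.W, IncompRel F.le a b → IncompRel F.le b c →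
      IncompRel F.le a c → False) : F.Valid bw2ax := by
  intro V hV w
  by_contra hc
  simp only [bw2ax, force, not_or, not_forall] at hc
  obtain ⟨⟨v0, -, h0, h10, h20⟩, ⟨v1, -, h1, h01, h21⟩, ⟨v2, -, h2, h02, h12⟩⟩ := hc
  have incomp : ∀ {p q a b}, V p a → ¬ V p b → V q b → ¬ V q a → IncompRel F.le a b :=
    fun hpa hpb hqb hqa => ⟨fun h => hpb (hV _ _ _ h hpa), fun h => hqa (hV _ _ _ h hqb)⟩
  exact hwidth v0 v1 v2 (incomp h0 h01 h1 h10) (incomp h1 h12 h2 h21) (incomp h0 h02 h2 h20)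

theorem valid_wPLax_of_lt_of_incompRel
    (hP : ∀ u z v : F.W, F.lt u z → IncompRel F.le z v → F.le u v) : F.Valid wPLax := by
  intro V hV w
  by_contra hc
  simp only [wPLax, force, not_or, not_forall] at hc
  obtain ⟨⟨v, -, hqv, hpv⟩, ⟨u, -, hpeirce, hpu⟩⟩ := hc
  -- `(p → q) → p` holds at `u`, so wherever `p` fails above `u`, so does `p → q`
  have refute : ∀ x, F.le u x → ¬ V 0 x → ∃ z, F.le x z ∧ V 0 z ∧ ¬ V 1 z := by
    intro x hux hpx
    by_contra! h
    exact hpx (hpeirce x hux h)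
  obtain ⟨z, huz, hpz, hqz⟩ := refute u (F.refl u) hpu
  have hzv : IncompRel F.le z v :=
    ⟨fun h => hpv (hV 0 z v h hpz), fun h => hqz (hV 1 v z h hqv)⟩
  have hu_lt_z : F.lt u z := ⟨huz, fun h => hpu (h ▸ hpz)⟩
  obtain ⟨z', hvz', -, hqz'⟩ := refute v (hP u z v hu_lt_z hzv) hpv
  exact hqz' (hV 1 v z' hvz' hqv)

end Frame

theorem isSILogic_logK (K : Set Frame) : IsSILogic (LogK K) :=
  ⟨fun _ hφ _ _ => Frame.valid_of_IPC hφ,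
    fun _ _ h1 h2 F hF V hV w => h1 F hF V hV w w (F.refl w) (h2 F hF V hV w),
    fun _ σ h F hF => (h F hF).subst σ⟩

theorem oplus_subset {L Γ L' : Set Form} (hL' : IsSILogic L') (hL : L ⊆ L') (hΓ : Γ ⊆ L') :
    oplus L Γ ⊆ L' :=
  Set.sInter_subset_of_mem ⟨hL', hL, hΓ⟩

theorem subset_oplus_right {L Γ : Set Form} : Γ ⊆ oplus L Γ :=
  fun _ hφ _ hM => hM.2.2 hφ

namespace SFrame

variable {n : ℕ}

theorem le_iff {a b : (SFrame n).W} : (SFrame n).le a b ↔ a = b ∨ sIdx n b < sIdx n a :=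
  Iff.rfl

theorem le_top (hn : 0 < n) (w : (SFrame n).W) : (SFrame n).le w (some none) := by
  rcases w with _ | (_ | ⟨j, s⟩)
  · exact Or.inr hn
  · exact Or.inl rfl
  · exact Or.inr j.succ_pos

theorem sIdx_eq_of_incompRel {a b : (SFrame n).W} (h : IncompRel (SFrame n).le a b) :
    sIdx n a = sIdx n b := by
  simp only [IncompRel, le_iff, not_or] at h
  omega

def slot : (SFrame n).W → Bool
  | none => true
  | some none => false
  | some (some (_, s)) => s

theorem eq_of_sIdx_eq_of_slot_eq {a b : (SFrame n).W} (h : sIdx n a = sIdx n b)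
    (hs : slot a = slot b) : a = b := by
  rcases a with _ | (_ | ⟨i, s⟩) <;> rcases b with _ | (_ | ⟨j, t⟩) <;>
    simp only [sIdx, slot, Bool.false_eq_true, Bool.true_eq_false] at h hs ⊢
  · rfl
  · have := j.isLt; omega
  · rfl
  · omega
  · have := i.isLt; omega
  · omega
  · obtain rfl : i = j := Fin.ext (by omega)
    subst hs
    rfl

theorem no_three_incompRel (a b c : (SFrame n).W) (hab : IncompRel (SFrame n).le a b)
    (hbc : IncompRel (SFrame n).le b c) (hac : IncompRel (SFrame n).le a c) : False := by
  have key : ∀ {x y}, IncompRel (SFrame n).le x y → slot x ≠ slot y := fun h hs =>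
    h.1 (eq_of_sIdx_eq_of_slot_eq (sIdx_eq_of_incompRel h) hs ▸ (SFrame n).refl _)
  exact (by decide : ∀ x y z : Bool, x ≠ y → y ≠ z → x ≠ z → False) _ _ _
    (key hab) (key hbc) (key hac)

theorem le_of_lt_of_incompRel {u z v : (SFrame n).W} (huz : (SFrame n).lt u z)
    (hzv : IncompRel (SFrame n).le z v) : (SFrame n).le u v := by
  have := sIdx_eq_of_incompRel hzv
  obtain ⟨rfl | h, hne⟩ := huz
  · exact absurd rfl hne
  · exact Or.inr (by omega)

end SFrame

theorem boxLogic_subset_logK : BoxLogic ⊆ LogK {F | ∃ n, 2 ≤ n ∧ F = SFrame n} := by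
  have hK := isSILogic_logK {F | ∃ n, 2 ≤ n ∧ F = SFrame n}
  refine oplus_subset hK (oplus_subset hK hK.1 ?_) ?_
  · rintro _ rfl F ⟨n, -, rfl⟩
    exact Frame.valid_wPLax_of_lt_of_incompRel fun _ _ _ => SFrame.le_of_lt_of_incompRel
  · rintro _ (rfl | rfl) F ⟨n, hn, rfl⟩
    · exact Frame.valid_bw2ax_of_no_three_incompRel SFrame.no_three_incompRel
    · exact Frame.valid_kcax_of_le_top (SFrame.le_top (by omega))

def Frame.ofPartialOrder (β : Type) [PartialOrder β] : Frame :=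
  ⟨β, (· ≤ ·), le_refl, fun _ _ _ => le_trans, fun _ _ => le_antisymm⟩

theorem IsPMorphism.force_comp_iff {P Q : Frame} {f : P.W → Q.W} (hf : IsPMorphism P Q f)
    (V : ℕ → Q.W → Prop) (φ : Form) (w : P.W) :
    P.force (fun p x => V p (f x)) φ w ↔ Q.force V φ (f w) := by
  induction φ generalizing w with
  | var | bot | top => exact Iff.rfl
  | and φ ψ ihφ ihψ => exact and_congr (ihφ w) (ihψ w)
  | or φ ψ ihφ ihψ => exact or_congr (ihφ w) (ihψ w)
  | imp φ ψ ihφ ihψ =>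
      constructor
      · intro h b hwb hφ
        obtain ⟨a, hwa, rfl⟩ := hf.2 w b hwb
        exact (ihψ a).1 (h a hwa ((ihφ a).2 hφ))
      · exact fun h v hwv hφ => (ihψ v).2 (h (f v) (hf.1 w v hwv) ((ihφ v).1 hφ))

theorem exists_level_eq_pair {β : Type*} (ρ : β → ℕ)
    (hfib : ∀ a b c, ρ a = ρ b → ρ b = ρ c → a = b ∨ b = c ∨ a = c) {m : ℕ}
    (hm : ∃ y, ρ y = m) : ∃ a b : β, ∀ y, ρ y = m ↔ y = a ∨ y = b := by
  obtain ⟨a, ha⟩ := hm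
  by_cases hb : ∃ b, ρ b = m ∧ b ≠ a
  · obtain ⟨b, hb, hba⟩ := hb
    refine ⟨a, b, fun y => ⟨fun hy => ?_, by rintro (rfl | rfl) <;> assumption⟩⟩
    rcases hfib y a b (hy.trans ha.symm) (ha.trans hb.symm) with h | h | h
    · exact Or.inl h
    · exact absurd h.symm hba
    · exact Or.inr h
  · push Not at hb
    exact ⟨a, a, fun y => ⟨fun hy => Or.inl (hb y hy), by rintro (rfl | rfl) <;> exact ha⟩⟩

theorem Order.coheight_ne_top_of_finite {α : Type*} [Preorder α] [Finite α] (a : α) :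
    Order.coheight a ≠ ⊤ := by
  have := Fintype.ofFinite α
  refine ne_top_of_le_ne_top (ENat.natCast_ne_top (Fintype.card α))
    (Order.coheight_le fun p _ => ?_)
  exact_mod_cast p.length_lt_card.le

section LayeredPoset

variable {β : Type} [PartialOrder β]

/-- Under the tower property, incomparable points have the same strict upper sets. -/
theorem Order.coheight_eq_of_incompRel
    (hP : ∀ u z v : β, u < z → IncompRel (· ≤ ·) z v → u ≤ v) {a b : β}
    (hab : IncompRel (· ≤ ·) a b) : Order.coheight a = Order.coheight b := by
  have lt_of_lt : ∀ {a b : β}, IncompRel (· ≤ ·) a b → ∀ y, a < y → b < y := by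
    intro a b hab y hay
    by_cases hby : b ≤ y
    · exact hby.lt_of_ne fun h => hab.1 (h ▸ hay.le)
    · by_cases hyb : y ≤ b
      · exact absurd (hay.le.trans hyb) hab.1
      · exact absurd (hP a y b hay ⟨hyb, hby⟩) hab.1
  have hgt : ∀ y, a < y ↔ b < y := fun y => ⟨lt_of_lt hab y, lt_of_lt hab.symm y⟩
  rw [Order.coheight_eq_iSup_gt_coheight a, Order.coheight_eq_iSup_gt_coheight b]
  simp only [gt_iff_lt, hgt]

/-- The layers of `S_n` are sent onto the levels of `ρ` (counted from the top), the bottom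
level being repeated. -/
theorem exists_isPMorphism_sFrame_of_rank (ρ : β → ℕ) (hρ : ∀ a b, a < b ↔ ρ b < ρ a)
    (hfib : ∀ a b c, ρ a = ρ b → ρ b = ρ c → a = b ∨ b = c ∨ a = c) {x₀ t : β}
    (hx₀ : IsBot x₀) (ht : IsTop t) (hsurj : ∀ m ≤ ρ x₀, ∃ y, ρ y = m) :
    ∃ n, 2 ≤ n ∧ ∃ g : (SFrame n).W → β,
      IsPMorphism (SFrame n) (Frame.ofPartialOrder β) g ∧ g none = x₀ := by
  classical
  set H := ρ x₀
  have level_zero : ∀ y, ρ y = 0 → y = t := fun y hy =>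
    (ht y).eq_or_lt.resolve_right fun h => by have := (hρ y t).1 h; omega
  have level_H : ∀ y, ρ y = H → y = x₀ := fun y hy =>
    ((hx₀ y).eq_or_lt.resolve_right fun h => by have := (hρ x₀ y).1 h; omega).symm
  have hlevel : ∀ m, ∃ a b : β, m ≤ H → ∀ y, ρ y = m ↔ y = a ∨ y = b := fun m =>
    if hm : m ≤ H then
      (exists_level_eq_pair ρ hfib (hsurj m hm)).imp fun _ => Exists.imp fun _ h _ => h
    else ⟨x₀, x₀, fun h => absurd h hm⟩
  choose lo hi hlohi using hlevel
  set n := H + 2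
  let ℓ : (SFrame n).W → ℕ := fun w => min (sIdx n w) H
  let g : (SFrame n).W → β := fun w => if SFrame.slot w then hi (ℓ w) else lo (ℓ w)
  have hρg : ∀ w, ρ (g w) = ℓ w := by
    intro w
    have := hlohi (ℓ w) (min_le_right _ _)
    by_cases hs : SFrame.slot w <;> simp only [g, hs, if_true, if_false, Bool.false_eq_true]
    · exact (this _).2 (Or.inr rfl)
    · exact (this _).2 (Or.inl rfl)
  refine ⟨n, by omega, g, ⟨?_, ?_⟩, level_H _ ((hρg none).trans (by simp [ℓ, sIdx, n]))⟩
  · rintro w w' (rfl | hww')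
    · exact le_rfl
    · by_cases hlt : ℓ w' < ℓ w
      · exact ((hρ _ _).2 (by rwa [hρg, hρg])).le
      · have h1 : ℓ w = H := by simp only [ℓ] at hlt ⊢; omega
        have h2 : ℓ w' = H := by simp only [ℓ] at hlt ⊢; omega
        exact (level_H _ ((hρg w).trans h1)).trans (level_H _ ((hρg w').trans h2)).symm |>.le
  · intro w y hwy
    obtain hwy | hwy := (show g w ≤ y from hwy).eq_or_lt
    · exact ⟨w, (SFrame n).refl w, hwy⟩
    have hy := (hρ _ _).1 hwy
    rw [hρg] at hy
    have hℓ : ℓ w ≤ sIdx n w := min_le_left _ _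
    have hℓH : ℓ w ≤ H := min_le_right _ _
    by_cases h0 : ρ y = 0
    · refine ⟨some none, SFrame.le_top (by omega) w, ?_⟩
      rw [level_zero y h0]
      exact level_zero _ ((hρg _).trans (by simp [ℓ, sIdx]))
    obtain ⟨m, hm⟩ := Nat.exists_eq_add_one_of_ne_zero h0
    let w' : (SFrame n).W := some (some (⟨m, by omega⟩, decide (y = hi (m + 1))))
    have hℓw' : ℓ w' = m + 1 := by simp only [ℓ, w', sIdx]; omega
    refine ⟨w', Or.inr (show m + 1 < sIdx n w by omega), ?_⟩
    have hy' := (hlohi (m + 1) (by omega) y).1 hm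
    simp only [g, hℓw']
    split_ifs with hhi
    · exact (of_decide_eq_true hhi).symm
    · exact (hy'.resolve_right fun h => hhi (decide_eq_true h)).symm

/-- The tower property `u < z ∥ v → u ≤ v` makes the coheight a rank whose levels are the
antichains. -/
theorem exists_isPMorphism_sFrame [Finite β] {x₀ t : β} (hx₀ : IsBot x₀) (ht : IsTop t)
    (hwidth : ∀ a b c : β, IncompRel (· ≤ ·) a b → IncompRel (· ≤ ·) b c →
      IncompRel (· ≤ ·) a c → False)
    (hP : ∀ u z v : β, u < z → IncompRel (· ≤ ·) z v → u ≤ v) :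
    ∃ n, 2 ≤ n ∧ ∃ g : (SFrame n).W → β,
      IsPMorphism (SFrame n) (Frame.ofPartialOrder β) g ∧ g none = x₀ := by
  choose ρ hρ using fun a : β => ENat.ne_top_iff_exists.1 (Order.coheight_ne_top_of_finite a)
  have lt_of_lt : ∀ {a b : β}, a < b → ρ b < ρ a := by
    intro a b h
    have := Order.coheight_strictAnti h (by simp [← hρ])
    rwa [← hρ, ← hρ, Nat.cast_lt] at this
  have le_of_le : ∀ {a b : β}, a ≤ b → ρ b ≤ ρ a := by
    intro a b h
    have := Order.coheight_anti h
    rwa [← hρ, ← hρ, Nat.cast_le] at this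
  have incompRel_of_eq : ∀ {a b : β}, ρ a = ρ b → a ≠ b → IncompRel (· ≤ ·) a b :=
    fun h hne => ⟨fun hab => by have := lt_of_lt (hab.lt_of_ne hne); omega,
      fun hba => by have := lt_of_lt (hba.lt_of_ne hne.symm); omega⟩
  refine exists_isPMorphism_sFrame_of_rank ρ (fun a b => ⟨lt_of_lt, fun h => ?_⟩) ?_ hx₀ ht ?_
  · by_contra hab
    by_cases hba : b ≤ a
    · exact absurd (le_of_le hba) (by omega)
    · have hinc : IncompRel (· ≤ ·) a b := ⟨fun h => hab (h.lt_of_not_ge hba), hba⟩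
      have := congrArg ENat.toNat (Order.coheight_eq_of_incompRel hP hinc)
      simp only [← hρ, ENat.toNat_natCast] at this
      omega
  · intro a b c hab hbc
    by_contra! hne
    exact hwidth a b c (incompRel_of_eq hab hne.1) (incompRel_of_eq hbc hne.2.1)
      (incompRel_of_eq (hab.trans hbc) hne.2.2)
  · obtain ⟨p, hhead, hlen⟩ := Order.exists_series_of_coheight_eq_coe x₀ (hρ x₀).symm
    intro m hm
    refine ⟨p ⟨ρ x₀ - m, by omega⟩, ?_⟩
    have := Order.coheight_eq_index_of_length_eq_head_coheight (p := p)
      (by rw [hhead, hlen, hρ]) ⟨ρ x₀ - m, by omega⟩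
    rw [← hρ, Nat.cast_inj] at this
    simp only [this, Fin.val_rev, hlen]
    omega

end LayeredPoset

namespace Form

def subformulas : Form → Finset Form
  | var p => {var p}
  | bot => {bot}
  | top => {top}
  | and φ ψ => insert (and φ ψ) (φ.subformulas ∪ ψ.subformulas)
  | or φ ψ => insert (or φ ψ) (φ.subformulas ∪ ψ.subformulas)
  | imp φ ψ => insert (imp φ ψ) (φ.subformulas ∪ ψ.subformulas)

@[simp]
theorem mem_subformulas_self (φ : Form) : φ ∈ φ.subformulas := by
  cases φ <;> simp [subformulas]

theorem subformulas_subset {φ ψ : Form} (h : ψ ∈ φ.subformulas) :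
    ψ.subformulas ⊆ φ.subformulas := by
  induction φ with
  | var | bot | top =>
      rw [subformulas, Finset.mem_singleton] at h
      rw [h]
  | and φ₁ φ₂ ih₁ ih₂ | or φ₁ φ₂ ih₁ ih₂ | imp φ₁ φ₂ ih₁ ih₂ =>
      simp only [subformulas, Finset.mem_insert, Finset.mem_union] at h ⊢
      rcases h with rfl | h | h
      · rfl
      · exact (ih₁ h).trans (Finset.subset_union_left.trans (Finset.subset_insert _ _))
      · exact (ih₂ h).trans (Finset.subset_union_right.trans (Finset.subset_insert _ _))

end Form

theorem IPC.imp_self (φ : Form) : IPC (.imp φ φ) :=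
  .mp _ _ (.mp _ _ (.ax2 φ (.imp φ φ) φ) (.ax1 φ (.imp φ φ))) (.ax1 φ φ)

inductive Prov (Γ : Set Form) : Form → Prop
  | prem {φ : Form} : φ ∈ Γ → Prov Γ φ
  | ipc {φ : Form} : IPC φ → Prov Γ φ
  | mp {φ ψ : Form} : Prov Γ (.imp φ ψ) → Prov Γ φ → Prov Γ ψ

namespace Prov

variable {Γ Δ : Set Form} {φ ψ : Form}

theorem mono (h : Γ ⊆ Δ) (hφ : Prov Γ φ) : Prov Δ φ := by
  induction hφ with
  | prem hφ => exact prem (h hφ)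
  | ipc hφ => exact ipc hφ
  | mp _ _ ih₁ ih₂ => exact mp ih₁ ih₂

theorem deduction (h : Prov (insert φ Γ) ψ) : Prov Γ (.imp φ ψ) := by
  induction h with
  | @prem ψ hψ =>
      rcases hψ with rfl | hψ
      · exact ipc (IPC.imp_self ψ)
      · exact mp (ipc (.ax1 ψ φ)) (prem hψ)
  | @ipc ψ hψ => exact mp (ipc (.ax1 ψ φ)) (ipc hψ)
  | @mp χ ψ _ _ ih₁ ih₂ => exact mp (mp (ipc (.ax2 φ χ ψ)) ih₁) ih₂

theorem exists_mem_of_isChain {c : Set (Set Form)} (hc : IsChain (· ⊆ ·) c) (hne : c.Nonempty)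
    (h : Prov (⋃₀ c) φ) : ∃ s ∈ c, Prov s φ := by
  induction h with
  | prem hφ =>
      obtain ⟨s, hs, hφs⟩ := hφ
      exact ⟨s, hs, prem hφs⟩
  | ipc hφ => exact ⟨hne.some, hne.some_mem, ipc hφ⟩
  | mp _ _ ih₁ ih₂ =>
      obtain ⟨s₁, hs₁, h₁⟩ := ih₁
      obtain ⟨s₂, hs₂, h₂⟩ := ih₂
      rcases hc.total hs₁ hs₂ with h | h
      · exact ⟨s₂, hs₂, mp (h₁.mono h) h₂⟩
      · exact ⟨s₁, hs₁, mp h₁ (h₂.mono h)⟩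

theorem mem_of_isSILogic {M : Set Form} (hM : IsSILogic M) (h : Prov M φ) : φ ∈ M := by
  induction h with
  | prem hφ => exact hφ
  | ipc hφ => exact hM.1 hφ
  | mp _ _ ih₁ ih₂ => exact hM.2.1 _ _ ih₁ ih₂

end Prov

structure IsPrimeTheory (T : Set Form) : Prop where
  closed {φ : Form} : Prov T φ → φ ∈ T
  bot_notMem : Form.bot ∉ T
  mem_or {φ ψ : Form} : Form.or φ ψ ∈ T → φ ∈ T ∨ ψ ∈ T

namespace IsPrimeTheory

variable {T : Set Form} {φ ψ : Form}

theorem mem_of_IPC (hT : IsPrimeTheory T) (h : IPC φ) : φ ∈ T :=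
  hT.closed (.ipc h)

theorem mp_mem (hT : IsPrimeTheory T) (h₁ : Form.imp φ ψ ∈ T) (h₂ : φ ∈ T) : ψ ∈ T :=
  hT.closed (.mp (.prem h₁) (.prem h₂))

theorem and_mem_iff (hT : IsPrimeTheory T) : Form.and φ ψ ∈ T ↔ φ ∈ T ∧ ψ ∈ T :=
  ⟨fun h => ⟨hT.mp_mem (hT.mem_of_IPC (.andE1 φ ψ)) h, hT.mp_mem (hT.mem_of_IPC (.andE2 φ ψ)) h⟩,
    fun h => hT.mp_mem (hT.mp_mem (hT.mem_of_IPC (.andI φ ψ)) h.1) h.2⟩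

theorem or_mem_of_left (hT : IsPrimeTheory T) (h : φ ∈ T) : Form.or φ ψ ∈ T :=
  hT.mp_mem (hT.mem_of_IPC (.orI1 φ ψ)) h

theorem or_mem_of_right (hT : IsPrimeTheory T) (h : ψ ∈ T) : Form.or φ ψ ∈ T :=
  hT.mp_mem (hT.mem_of_IPC (.orI2 φ ψ)) h

theorem imp_mem_of_mem (hT : IsPrimeTheory T) (h : ψ ∈ T) : Form.imp φ ψ ∈ T :=
  hT.mp_mem (hT.mem_of_IPC (.ax1 ψ φ)) h

end IsPrimeTheory

theorem exists_isPrimeTheory {Γ : Set Form} {χ : Form} (h : ¬ Prov Γ χ) :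
    ∃ T, Γ ⊆ T ∧ IsPrimeTheory T ∧ χ ∉ T := by
  obtain ⟨T, hΓT, hT, hmax⟩ :=
    zorn_subset_nonempty {T | Γ ⊆ T ∧ ¬ Prov T χ}
      (fun c hcS hc hne => ⟨⋃₀ c,
        ⟨(hcS hne.some_mem).1.trans (Set.subset_sUnion_of_mem hne.some_mem), fun hp => by
          obtain ⟨s, hs, hps⟩ := hp.exists_mem_of_isChain hc hne
          exact (hcS hs).2 hps⟩,
        fun _ => Set.subset_sUnion_of_mem⟩) Γ ⟨subset_rfl, h⟩
  have imp_of_notMem : ∀ {φ}, φ ∉ T → Prov T (.imp φ χ) := by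
    intro φ hφ
    by_contra hn
    exact hφ (hmax ⟨hT.1.trans (Set.subset_insert φ T), mt Prov.deduction hn⟩
      (Set.subset_insert φ T) (Set.mem_insert φ T))
  refine ⟨T, hΓT, ⟨fun {φ} hφ => ?_, fun hbot => ?_, fun {φ ψ} hor => ?_⟩,
    fun hχ => hT.2 (.prem hχ)⟩
  · by_contra hn
    exact hT.2 (.mp (imp_of_notMem hn) hφ)
  · exact hT.2 (.mp (.ipc (.botE χ)) (.prem hbot))
  · by_contra! hn
    exact hT.2 (.mp (.mp (.mp (.ipc (.orE φ ψ χ)) (imp_of_notMem hn.1)) (imp_of_notMem hn.2))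
      (.prem hor))

theorem IsPrimeTheory.exists_witness {T : Set Form} (hT : IsPrimeTheory T) {γ δ : Form}
    (h : Form.imp γ δ ∉ T) : ∃ T', IsPrimeTheory T' ∧ T ⊆ T' ∧ γ ∈ T' ∧ δ ∉ T' := by
  obtain ⟨T', hT'0, hT', hδ⟩ :=
    exists_isPrimeTheory (Γ := insert γ T) fun hp => h (hT.closed hp.deduction)
  exact ⟨T', hT', (Set.subset_insert γ T).trans hT'0, hT'0 (Set.mem_insert γ T), hδ⟩

section CanonicalFrame

variable {x₀ : Set Form}

theorem IsPrimeTheory.exists_mem_notMem_notMem {a b c : Set Form} (ha : IsPrimeTheory a)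
    (hb : IsPrimeTheory b) (hc : IsPrimeTheory c) (hab : ¬ a ⊆ b) (hac : ¬ a ⊆ c) :
    ∃ A ∈ a, A ∉ b ∧ A ∉ c := by
  obtain ⟨A₁, hA₁a, hA₁b⟩ := Set.not_subset.1 hab
  obtain ⟨A₂, hA₂a, hA₂c⟩ := Set.not_subset.1 hac
  exact ⟨.and A₁ A₂, ha.and_mem_iff.2 ⟨hA₁a, hA₂a⟩, fun h => hA₁b (hb.and_mem_iff.1 h).1,
    fun h => hA₂c (hc.and_mem_iff.1 h).2⟩

theorem no_three_incompRel_of_bw2ax (hx₀ : IsPrimeTheory x₀) (hbw : ∀ σ, bw2ax.subst σ ∈ x₀)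
    {a b c : Set Form} (ha : IsPrimeTheory a) (hb : IsPrimeTheory b) (hc : IsPrimeTheory c)
    (hxa : x₀ ⊆ a) (hxb : x₀ ⊆ b) (hxc : x₀ ⊆ c) (hab : IncompRel (· ⊆ ·) a b)
    (hbc : IncompRel (· ⊆ ·) b c) (hac : IncompRel (· ⊆ ·) a c) : False := by
  obtain ⟨A, hAa, hAb, hAc⟩ := ha.exists_mem_notMem_notMem hb hc hab.1 hac.1
  obtain ⟨B, hBb, hBa, hBc⟩ := hb.exists_mem_notMem_notMem ha hc hab.2 hbc.1
  obtain ⟨C, hCc, hCa, hCb⟩ := hc.exists_mem_notMem_notMem ha hb hac.2 hbc.2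
  have refute : ∀ {T P Q R}, IsPrimeTheory T → x₀ ⊆ T → Form.imp P (.or Q R) ∈ x₀ → P ∈ T →
      Q ∉ T → R ∉ T → False := fun hT hxT h hP hQ hR =>
    (hT.mem_or (hT.mp_mem (hxT h) hP)).elim hQ hR
  have := hbw fun i => [A, B, C].getD i .bot
  simp only [bw2ax, Form.subst, List.getD_cons_zero, List.getD_cons_succ] at this
  rcases hx₀.mem_or this with h | h
  · exact refute ha hxa h hAa hBa hCa
  rcases hx₀.mem_or h with h | h
  · exact refute hb hxb h hBb hAb hCb
  · exact refute hc hxc h hCc hAc hBc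

theorem Prov.exists_imp_mem_of_union {a b : Set Form} (ha : IsPrimeTheory a)
    (hb : IsPrimeTheory b) {φ : Form} (h : Prov (a ∪ b) φ) : ∃ β ∈ b, Form.imp β φ ∈ a := by
  induction h with
  | @prem φ hφ =>
      rcases hφ with hφ | hφ
      · exact ⟨.top, hb.mem_of_IPC .topI, ha.imp_mem_of_mem hφ⟩
      · exact ⟨φ, hφ, ha.mem_of_IPC (IPC.imp_self φ)⟩
  | ipc hφ => exact ⟨.top, hb.mem_of_IPC .topI, ha.imp_mem_of_mem (ha.mem_of_IPC hφ)⟩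
  | mp _ _ ih₁ ih₂ =>
      obtain ⟨β₁, hβ₁, h₁⟩ := ih₁
      obtain ⟨β₂, hβ₂, h₂⟩ := ih₂
      refine ⟨.and β₁ β₂, hb.and_mem_iff.2 ⟨hβ₁, hβ₂⟩, ha.closed (Prov.deduction ?_)⟩
      have hβ : Prov (insert (.and β₁ β₂) a) (.and β₁ β₂) := .prem (Set.mem_insert _ _)
      exact .mp (.mp (.prem (Set.mem_insert_of_mem _ h₁)) (.mp (.ipc (.andE1 β₁ β₂)) hβ))
        (.mp (.prem (Set.mem_insert_of_mem _ h₂)) (.mp (.ipc (.andE2 β₁ β₂)) hβ))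

theorem exists_upper_bound_of_kcax (hx₀ : IsPrimeTheory x₀) (hkc : ∀ σ, kcax.subst σ ∈ x₀)
    {a b : Set Form} (ha : IsPrimeTheory a) (hb : IsPrimeTheory b) (hxa : x₀ ⊆ a)
    (hxb : x₀ ⊆ b) : ∃ c, IsPrimeTheory c ∧ a ⊆ c ∧ b ⊆ c := by
  obtain ⟨c, hc₀, hc, -⟩ := exists_isPrimeTheory (Γ := a ∪ b) (χ := .bot) fun hp => by
    obtain ⟨B, hBb, hnB⟩ := hp.exists_imp_mem_of_union ha hb
    have := hkc fun _ => B
    simp only [kcax, Form.neg, Form.subst] at this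
    rcases hx₀.mem_or this with h | h
    · exact hb.bot_notMem (hb.mp_mem (hxb h) hBb)
    · exact ha.bot_notMem (ha.mp_mem (hxa h) hnB)
  exact ⟨c, hc, Set.subset_union_left.trans hc₀, Set.subset_union_right.trans hc₀⟩

theorem subset_of_ssubset_of_incompRel (hx₀ : IsPrimeTheory x₀)
    (hwpl : ∀ σ, wPLax.subst σ ∈ x₀) (hbw : ∀ σ, bw2ax.subst σ ∈ x₀) {u z v : Set Form}
    (hu : IsPrimeTheory u) (hz : IsPrimeTheory z) (hv : IsPrimeTheory v) (hxu : x₀ ⊆ u)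
    (hxv : x₀ ⊆ v) (huz : u ⊂ z) (hzv : IncompRel (· ⊆ ·) z v) : u ⊆ v := by
  by_contra huv
  obtain ⟨A, hAu, hAv⟩ := Set.not_subset.1 huv
  obtain ⟨B, hBv, hBz⟩ := Set.not_subset.1 hzv.2
  obtain ⟨C, hCz, hCu⟩ := Set.not_subset.1 huz.2
  obtain ⟨D, hDz, hDv⟩ := Set.not_subset.1 hzv.1
  -- `P` lies in `z` but neither in `u` nor in `v`. The weak Peirce law for `P` and `B` yields a
  -- prime `s ⊇ u` refuting `P` but containing `P → B`; by width two `s ⊆ z`, so `B ∈ z`.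
  set P := Form.or (.and C D) (.and B A)
  have hPz : P ∈ z := hz.or_mem_of_left (hz.and_mem_iff.2 ⟨hCz, hDz⟩)
  have hPv : P ∉ v := fun h => (hv.mem_or h).elim (fun h => hDv (hv.and_mem_iff.1 h).2)
    (fun h => hAv (hv.and_mem_iff.1 h).2)
  have hPu : P ∉ u := fun h => (hu.mem_or h).elim (fun h => hCu (hu.and_mem_iff.1 h).1)
    (fun h => hBz (huz.1 (hu.and_mem_iff.1 h).1))
  have := hwpl fun i => [P, B].getD i .bot
  simp only [wPLax, Form.subst, List.getD_cons_zero, List.getD_cons_succ] at this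
  rcases hx₀.mem_or this with h | h
  · exact hPv (hv.mp_mem (hxv h) hBv)
  obtain ⟨s, hs, hus, hPBs, hPs⟩ := hu.exists_witness fun h' => hPu (hu.mp_mem (hxu h) h')
  have hzs : ¬ z ⊆ s := fun h => hPs (hs.or_mem_of_left (hs.and_mem_iff.2 ⟨h hCz, h hDz⟩))
  have hsv : IncompRel (· ⊆ ·) s v := ⟨fun h => hAv (h (hus hAu)),
    fun h => hPs (hs.or_mem_of_right (hs.and_mem_iff.2 ⟨h hBv, hus hAu⟩))⟩
  have hsz : s ⊆ z := by
    by_contra hsz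
    exact no_three_incompRel_of_bw2ax hx₀ hbw hs hz hv (hxu.trans hus) (hxu.trans huz.1) hxv
      ⟨hsz, hzs⟩ hzv hsv
  exact hBz (hz.mp_mem (hsz hPBs) hPz)

end CanonicalFrame

def WitnessClosed (φ : Form) (S : Set (Set Form)) : Prop :=
  ∀ y ∈ S, ∀ γ δ, Form.imp γ δ ∈ φ.subformulas → Form.imp γ δ ∉ y →
    ∃ y' ∈ S, y ⊆ y' ∧ γ ∈ y' ∧ δ ∉ y'

theorem WitnessClosed.insert {φ : Form} {S : Set (Set Form)} {z : Set Form}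
    (hS : WitnessClosed φ S)
    (hz : ∀ γ δ, Form.imp γ δ ∈ φ.subformulas → Form.imp γ δ ∉ z →
      ∃ y' ∈ insert z S, z ⊆ y' ∧ γ ∈ y' ∧ δ ∉ y') :
    WitnessClosed φ (insert z S) := by
  rintro y (rfl | hy) γ δ hγδ hny
  · exact hz γ δ hγδ hny
  · obtain ⟨y', hy', h⟩ := hS y hy γ δ hγδ hny
    exact ⟨y', Set.mem_insert_of_mem _ hy', h⟩

theorem WitnessClosed.biUnion {φ : Form} {ι : Type*} {s : Set ι} {F : ι → Set (Set Form)}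
    (h : ∀ i ∈ s, WitnessClosed φ (F i)) : WitnessClosed φ (⋃ i ∈ s, F i) := by
  intro y hy γ δ hγδ hny
  obtain ⟨i, hi, hyi⟩ := Set.mem_iUnion₂.1 hy
  obtain ⟨y', hy', h⟩ := h i hi y hyi γ δ hγδ hny
  exact ⟨y', Set.mem_biUnion hi hy', h⟩

open Classical in
theorem card_filter_notMem_lt {φ ψ : Form} {z w : Set Form} (hzw : z ⊆ w)
    (hψ : ψ ∈ φ.subformulas) (hψw : ψ ∈ w) (hψz : ψ ∉ z) :
    (φ.subformulas.filter (· ∉ w)).card < (φ.subformulas.filter (· ∉ z)).card :=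
  Finset.card_lt_card <| (Finset.ssubset_iff_of_subset
    (Finset.monotone_filter_right _ fun _ _ h hz => h (hzw hz))).2
    ⟨ψ, Finset.mem_filter.2 ⟨hψ, hψz⟩, fun h => (Finset.mem_filter.1 h).2 hψw⟩

/-- The witnesses are found by induction on the number of subformulas of `φ` outside `z`,
which every witness for an implication with antecedent outside `z` decreases. -/
theorem exists_finite_witnessClosed (φ : Form) {z : Set Form} (hz : IsPrimeTheory z) :
    ∃ S : Set (Set Form), S.Finite ∧ z ∈ S ∧ (∀ y ∈ S, IsPrimeTheory y ∧ z ⊆ y) ∧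
      WitnessClosed φ S := by
  classical
  induction hN : (φ.subformulas.filter (· ∉ z)).card using Nat.strong_induction_on
    generalizing z with
  | _ N ih =>
  have family : ∀ ψ : Form, ∃ Sψ : Set (Set Form), Sψ.Finite ∧
      (∀ y ∈ Sψ, IsPrimeTheory y ∧ z ⊆ y) ∧ WitnessClosed φ Sψ ∧
      ∀ γ δ, ψ = .imp γ δ → ψ ∈ φ.subformulas → ψ ∉ z → γ ∉ z →
        ∃ y ∈ Sψ, γ ∈ y ∧ δ ∉ y := by
    intro ψ
    by_cases hψ : ∃ γ δ, ψ = .imp γ δ ∧ ψ ∈ φ.subformulas ∧ ψ ∉ z ∧ γ ∉ z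
    · obtain ⟨γ, δ, rfl, hψφ, hψz, hγz⟩ := hψ
      obtain ⟨w, hw, hzw, hγw, hδw⟩ := hz.exists_witness hψz
      have hγφ : γ ∈ φ.subformulas :=
        Form.subformulas_subset hψφ (by simp [Form.subformulas])
      obtain ⟨Sw, hSwfin, hwSw, hSw, hwitw⟩ :=
        ih _ (hN ▸ card_filter_notMem_lt hzw hγφ hγw hγz) hw rfl
      refine ⟨Sw, hSwfin, fun y hy => ⟨(hSw y hy).1, hzw.trans (hSw y hy).2⟩, hwitw, ?_⟩
      rintro γ' δ' h - - -
      cases h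
      exact ⟨w, hwSw, hγw, hδw⟩
    · refine ⟨∅, Set.finite_empty, by simp, by simp [WitnessClosed], ?_⟩
      exact fun γ δ h₁ h₂ h₃ h₄ => absurd ⟨γ, δ, h₁, h₂, h₃, h₄⟩ hψ
  choose F hFfin hF hFwit hFz using family
  refine ⟨insert z (⋃ ψ ∈ φ.subformulas, F ψ),
    ((φ.subformulas.finite_toSet.biUnion fun ψ _ => hFfin ψ).insert z), Set.mem_insert z _,
    ?_, ?_⟩
  · rintro y (rfl | hy)
    · exact ⟨hz, subset_rfl⟩
    · obtain ⟨ψ, -, hyψ⟩ := Set.mem_iUnion₂.1 hy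
      exact hF ψ y hyψ
  · refine (WitnessClosed.biUnion fun ψ _ => hFwit ψ).insert fun γ δ hγδ hnz => ?_
    by_cases hγ : γ ∈ z
    · exact ⟨z, Set.mem_insert z _, subset_rfl, hγ, fun hδ => hnz (hz.imp_mem_of_mem hδ)⟩
    · obtain ⟨w, hw, hγw, hδw⟩ := hFz _ γ δ rfl hγδ hnz hγ
      exact ⟨w, Set.mem_insert_of_mem _ (Set.mem_biUnion hγδ hw), (hF _ w hw).2, hγw, hδw⟩

theorem IsPrimeTheory.exists_maximal_on_subformulas (φ : Form) {c : Set Form}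
    (hc : IsPrimeTheory c) :
    ∃ t, IsPrimeTheory t ∧ c ⊆ t ∧
      ∀ t', IsPrimeTheory t' → t ⊆ t' → ∀ ψ ∈ φ.subformulas, ψ ∈ t' → ψ ∈ t := by
  classical
  obtain ⟨t, ⟨ht, hct⟩, hmin⟩ :=
    (measure fun T : Set Form => (φ.subformulas.filter (· ∉ T)).card).wf.has_min
      {T | IsPrimeTheory T ∧ c ⊆ T} ⟨c, hc, subset_rfl⟩
  refine ⟨t, ht, hct, fun t' ht' htt' ψ hψ hψt' => ?_⟩
  by_contra hψt
  exact hmin t' ⟨ht', hct.trans htt'⟩ (card_filter_notMem_lt htt' hψ hψt' hψt)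

theorem IsPrimeTheory.mem_and_notMem_of_imp_notMem {φ : Form} {t : Set Form}
    (ht : IsPrimeTheory t)
    (hmax : ∀ t', IsPrimeTheory t' → t ⊆ t' → ∀ ψ ∈ φ.subformulas, ψ ∈ t' → ψ ∈ t) {γ δ : Form}
    (hγδ : Form.imp γ δ ∈ φ.subformulas) (hnt : Form.imp γ δ ∉ t) : γ ∈ t ∧ δ ∉ t := by
  obtain ⟨t', ht', htt', hγ, hδ⟩ := ht.exists_witness hnt
  exact ⟨hmax t' ht' htt' γ (Form.subformulas_subset hγδ (by simp [Form.subformulas])) hγ,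
    fun h => hδ (htt' h)⟩

/-- The top is an upper bound of the family, enlarged until no prime above it contains more
subformulas of `φ`, which makes it its own witness. -/
theorem exists_finite_witnessClosed_with_top {x₀ : Set Form} (hx₀ : IsPrimeTheory x₀)
    (hkc : ∀ σ, kcax.subst σ ∈ x₀) (φ : Form) :
    ∃ S : Set (Set Form), S.Finite ∧ x₀ ∈ S ∧ (∀ y ∈ S, IsPrimeTheory y ∧ x₀ ⊆ y) ∧
      WitnessClosed φ S ∧ ∃ t ∈ S, ∀ y ∈ S, y ⊆ t := by
  obtain ⟨W, hWfin, hx₀W, hW, hWwit⟩ := exists_finite_witnessClosed φ hx₀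
  have : Nonempty {T : Set Form // IsPrimeTheory T ∧ x₀ ⊆ T} := ⟨⟨x₀, hx₀, subset_rfl⟩⟩
  obtain ⟨c, hc⟩ := Directed.finite_set_le (r := (· ⊆ ·))
    (f := (Subtype.val : {T : Set Form // IsPrimeTheory T ∧ x₀ ⊆ T} → Set Form))
    (fun a b => by
      obtain ⟨c, hc, hac, hbc⟩ := exists_upper_bound_of_kcax hx₀ hkc a.2.1 b.2.1 a.2.2 b.2.2
      exact ⟨⟨c, hc, a.2.2.trans hac⟩, hac, hbc⟩)
    (hWfin.preimage Subtype.val_injective.injOn)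
  obtain ⟨t, ht, hct, hmax⟩ := IsPrimeTheory.exists_maximal_on_subformulas φ c.2.1
  refine ⟨insert t W, hWfin.insert t, Set.mem_insert_of_mem t hx₀W, ?_,
    hWwit.insert fun γ δ hγδ hnt =>
      ⟨t, Set.mem_insert t W, subset_rfl, ht.mem_and_notMem_of_imp_notMem hmax hγδ hnt⟩,
    t, Set.mem_insert t W, ?_⟩
  · rintro y (rfl | hy)
    · exact ⟨ht, c.2.2.trans hct⟩
    · exact hW y hy
  · rintro y (rfl | hy)
    · exact subset_rfl
    · exact (hc ⟨y, hW y hy⟩ hy).trans hct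

theorem force_iff_mem_of_witnessClosed {φ : Form} {S : Set (Set Form)}
    (hS : ∀ y ∈ S, IsPrimeTheory y) (hwit : WitnessClosed φ S) {ψ : Form}
    (hψ : ψ ∈ φ.subformulas) (y : S) :
    (Frame.ofPartialOrder S).force (fun p (y : S) => Form.var p ∈ (y : Set Form)) ψ y ↔
      ψ ∈ (y : Set Form) := by
  induction ψ generalizing y with
  | var => exact Iff.rfl
  | bot => exact ⟨False.elim, (hS y y.2).bot_notMem⟩
  | top => exact ⟨fun _ => (hS y y.2).mem_of_IPC .topI, fun _ => trivial⟩
  | and ψ₁ ψ₂ ih₁ ih₂ =>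
      have h₁ : ψ₁ ∈ φ.subformulas := Form.subformulas_subset hψ (by simp [Form.subformulas])
      have h₂ : ψ₂ ∈ φ.subformulas := Form.subformulas_subset hψ (by simp [Form.subformulas])
      exact (and_congr (ih₁ h₁ y) (ih₂ h₂ y)).trans (hS y y.2).and_mem_iff.symm
  | or ψ₁ ψ₂ ih₁ ih₂ =>
      have h₁ : ψ₁ ∈ φ.subformulas := Form.subformulas_subset hψ (by simp [Form.subformulas])
      have h₂ : ψ₂ ∈ φ.subformulas := Form.subformulas_subset hψ (by simp [Form.subformulas])
      exact ⟨fun h => h.elim (fun h => (hS y y.2).or_mem_of_left ((ih₁ h₁ y).1 h))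
        (fun h => (hS y y.2).or_mem_of_right ((ih₂ h₂ y).1 h)),
        fun h => ((hS y y.2).mem_or h).imp (ih₁ h₁ y).2 (ih₂ h₂ y).2⟩
  | imp γ δ ihγ ihδ =>
      have hγ : γ ∈ φ.subformulas := Form.subformulas_subset hψ (by simp [Form.subformulas])
      have hδ : δ ∈ φ.subformulas := Form.subformulas_subset hψ (by simp [Form.subformulas])
      constructor
      · intro h
        by_contra hny
        obtain ⟨y', hy'S, hyy', hγy', hδy'⟩ := hwit y y.2 γ δ hψ hny
        exact hδy' ((ihδ hδ ⟨y', hy'S⟩).1 (h ⟨y', hy'S⟩ hyy' ((ihγ hγ ⟨y', hy'S⟩).2 hγy')))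
      · exact fun h (v : S) hyv hγv => (ihδ hδ v).2 ((hS v v.2).mp_mem (hyv h) ((ihγ hγ v).1 hγv))


theorem exists_sFrame_not_valid {M : Set Form} (hM : IsSILogic M) (hwpl : wPLax ∈ M)
    (hbw : bw2ax ∈ M) (hkc : kcax ∈ M) {φ : Form} (hφ : φ ∉ M) :
    ∃ n, 2 ≤ n ∧ ¬ (SFrame n).Valid φ := by
  obtain ⟨x₀, hMx₀, hx₀, hφx₀⟩ := exists_isPrimeTheory fun h => hφ (h.mem_of_isSILogic hM)
  have inst : ∀ {χ}, χ ∈ M → ∀ σ, χ.subst σ ∈ x₀ := fun h σ => hMx₀ (hM.2.2 _ σ h)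
  obtain ⟨S, hSfin, hx₀S, hS, hwit, t, htS, htop⟩ :=
    exists_finite_witnessClosed_with_top hx₀ (inst hkc) φ
  have : Finite S := hSfin.to_subtype
  obtain ⟨n, hn, g, hg, hroot⟩ :=
    exists_isPMorphism_sFrame (β := S) (x₀ := ⟨x₀, hx₀S⟩) (t := ⟨t, htS⟩)
    (fun y => (hS y y.2).2) (fun y => htop y y.2)
    (fun a b c => no_three_incompRel_of_bw2ax hx₀ (inst hbw) (hS a a.2).1 (hS b b.2).1
      (hS c c.2).1 (hS a a.2).2 (hS b b.2).2 (hS c c.2).2)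
    (fun u z v huz => subset_of_ssubset_of_incompRel hx₀ (inst hwpl) (inst hbw) (hS u u.2).1
      (hS z z.2).1 (hS v v.2).1 (hS u u.2).2 (hS v v.2).2 huz)
  refine ⟨n, hn, fun hvalid => hφx₀ ?_⟩
  let V : ℕ → S → Prop := fun p y => Form.var p ∈ (y : Set Form)
  have := (hg.force_comp_iff V φ none).1
    (hvalid (fun p w => V p (g w)) (fun p a b hab h => hg.1 a b hab h) none)
  rwa [hroot, force_iff_mem_of_witnessClosed (fun y hy => (hS y hy).1) hwit
    (Form.mem_subformulas_self φ)] at this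

/-- The logic `Box = wPL ⊕ bw₂ ⊕ (¬p ∨ ¬¬p)` is the logic of
the class of the posets `S_n`. -/
theorem statement16 :
    BoxLogic = LogK {F | ∃ n, 2 ≤ n ∧ F = SFrame n} := by
  refine boxLogic_subset_logK.antisymm fun φ hφ M ⟨hM, hwPL, hax⟩ => ?_
  by_contra hφM
  obtain ⟨n, hn, hnot⟩ := exists_sFrame_not_valid hM (hwPL (subset_oplus_right rfl))
    (hax (Set.mem_insert _ _)) (hax (Set.mem_insert_of_mem _ rfl)) hφM
  exact hnot (hφ _ ⟨n, hn, rfl⟩)
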